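/- (Balinski's theorem) Let P ⊆ ℝⁿ be a compact polyhedron of dimension n, and let V be a set of at most n−1 vertices of P. Then for any two vertices v, w of P not in V, there exists a path v = u₀, u₁, ..., u_k = w in the graph of P (consecutive uᵢ adjacent, i.e., conv{uᵢ,uᵢ₊₁} an edge of P) with no uᵢ in V. Equivalently, the vertex-edge graph of an n-dimensional polytope is n-connected. -/

import Mathlib

/-!
Choose a linear functional `f` that is constant on `V ∪ {v}`; this is possible because these are at
most `n` points, and `f` is not constant on `P` because `P` is full-dimensional. Replacing `f` by
`-f` if necessary, `w` and some point of `P` lie above the level `α = f v`, which contains `V`.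
The simplex method climbs from `v` and from `w` along edges, with `f` strictly increasing, to the
face on which `f` is maximal; this face lies above `α`. Inside it, descending the functional that
exposes one of its vertices `p` leads from every vertex of the face to `p`.

A simplex step exists because the cone of feasible directions at a vertex is pointed: a
minimizer of `f` over a compact slice of it can be chosen extreme, hence on an extreme ray, and the
ray leaves the vertex along an edge.
-/

open Matrix Set
open scoped Classical

/-- A polyhedron in `ℝⁿ`: the solution set of a finite system of linear
inequalities `A x ≥ b`. -/
def IsPolyhedron {n : ℕ} (P : Set (Fin n → ℝ)) : Prop :=
  ∃ (m : ℕ) (A : Fin m → Fin n → ℝ) (b : Fin m → ℝ),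
    P = {x | ∀ i, A i ⬝ᵥ x ≥ b i}

/-- A face of `P`: the empty set or the set of minimizers of a linear
functional over `P`. -/
def IsFace {n : ℕ} (P F : Set (Fin n → ℝ)) : Prop :=
  F = ∅ ∨ ∃ c : Fin n → ℝ, F = {x ∈ P | ∀ y ∈ P, c ⬝ᵥ x ≤ c ⬝ᵥ y}

/-- Dimension of a polyhedron: dimension of the direction of its affine
hull, with the convention `pdim ∅ = -1`. -/
noncomputable def pdim {n : ℕ} (P : Set (Fin n → ℝ)) : ℤ :=
  if P = ∅ then -1 else (Module.finrank ℝ (vectorSpan ℝ P) : ℤ)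


/-- A vertex of `P` is a point whose singleton is a face of `P`. -/
def IsVertex {n : ℕ} (P : Set (Fin n → ℝ)) (v : Fin n → ℝ) : Prop :=
  IsFace P {v}

/-- Two points are adjacent vertices of `P` if they are distinct and the
segment between them is an edge (a 1-dimensional face) of `P`. -/
noncomputable def Adj {n : ℕ} (P : Set (Fin n → ℝ)) (v w : Fin n → ℝ) : Prop :=
  v ≠ w ∧ IsFace P (segment ℝ v w) ∧ pdim (segment ℝ v w) = 1

open Filter Topology

section Balinski

variable {n : ℕ}

def minSet (P : Set (Fin n → ℝ)) (c : Fin n → ℝ) : Set (Fin n → ℝ) :=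
  {x ∈ P | ∀ y ∈ P, c ⬝ᵥ x ≤ c ⬝ᵥ y}

lemma isFace_minSet (P : Set (Fin n → ℝ)) (c : Fin n → ℝ) : IsFace P (minSet P c) :=
  Or.inr ⟨c, rfl⟩

lemma IsFace.isExposed {P F : Set (Fin n → ℝ)} (hF : IsFace P F) : IsExposed ℝ P F := by
  rintro ⟨x, hx⟩
  rcases hF with rfl | ⟨c, rfl⟩
  · exact absurd hx (notMem_empty x)
  exact ⟨-LinearMap.toContinuousLinearMap (dotProductBilin ℝ ℝ c), by simp⟩

lemma IsVertex.mem {P : Set (Fin n → ℝ)} {v : Fin n → ℝ} (hv : IsVertex P v) : v ∈ P :=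
  hv.isExposed.subset rfl

lemma IsVertex.mem_extremePoints {P : Set (Fin n → ℝ)} {v : Fin n → ℝ} (hv : IsVertex P v) :
    v ∈ extremePoints ℝ P :=
  isExtreme_singleton.1 hv.isExposed.isExtreme

lemma Adj.symm {P : Set (Fin n → ℝ)} {v w : Fin n → ℝ} (h : Adj P v w) : Adj P w v := by
  obtain ⟨hne, hface, hdim⟩ := h
  exact ⟨hne.symm, segment_symm ℝ v w ▸ hface, segment_symm ℝ v w ▸ hdim⟩

lemma pdim_segment {v w : Fin n → ℝ} (h : v ≠ w) : pdim (segment ℝ v w) = 1 := by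
  rw [pdim, if_neg (nonempty_of_mem (left_mem_segment ℝ v w)).ne_empty, ← convexHull_pair,
    ← direction_affineSpan, affineSpan_convexHull, direction_affineSpan, vectorSpan_pair,
    finrank_span_singleton (vsub_ne_zero.2 h), Nat.cast_one]

lemma eq_zero_of_mem_extremePoints {E : Type*} [AddCommGroup E] [Module ℝ E] {S : Set E}
    {x z : E} (hx : x ∈ extremePoints ℝ S)
    (h : ∀ᶠ t in 𝓝[≥] (0 : ℝ), x + t • z ∈ S ∧ x + t • -z ∈ S) : z = 0 := by
  obtain ⟨t, ⟨h₁, h₂⟩, ht⟩ :=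
    ((h.filter_mono (nhdsWithin_mono _ Ioi_subset_Ici_self)).and self_mem_nhdsWithin).exists
  have hmid : x ∈ openSegment ℝ (x + t • z) (x + t • -z) :=
    ⟨1 / 2, 1 / 2, by norm_num, by norm_num, by norm_num, by module⟩
  simpa [ht.ne'] using hx.2 h₁ h₂ hmid

def edgeGraphOn (P S : Set (Fin n → ℝ)) : SimpleGraph (Fin n → ℝ) where
  Adj x y := Adj P x y ∧ x ∈ S ∧ y ∈ S
  symm := ⟨fun _ _ h => ⟨h.1.symm, h.2.2, h.2.1⟩⟩
  loopless := ⟨fun _ h => h.1.1 rfl⟩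

lemma edgeGraphOn_adj {P S : Set (Fin n → ℝ)} {x y : Fin n → ℝ} :
    (edgeGraphOn P S).Adj x y ↔ Adj P x y ∧ x ∈ S ∧ y ∈ S :=
  Iff.rfl

lemma edgeGraphOn_mono {P S T : Set (Fin n → ℝ)} (h : S ⊆ T) : edgeGraphOn P S ≤ edgeGraphOn P T :=
  fun _ _ hxy => edgeGraphOn_adj.2 ⟨hxy.1, h hxy.2.1, h hxy.2.2⟩

lemma exists_path_of_reachable {P S : Set (Fin n → ℝ)} {v w : Fin n → ℝ}
    (h : (edgeGraphOn P S).Reachable v w) (hw : w ∈ S) :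
    ∃ (k : ℕ) (u : ℕ → Fin n → ℝ), u 0 = v ∧ u k = w ∧
      (∀ i < k, Adj P (u i) (u (i + 1))) ∧ ∀ i ≤ k, u i ∈ S := by
  obtain ⟨p⟩ := h
  refine ⟨p.length, p.getVert, p.getVert_zero, p.getVert_length,
    fun i hi => (edgeGraphOn_adj.1 (p.adj_getVert_succ hi)).1, fun i hi => ?_⟩
  rcases hi.lt_or_eq with hi | rfl
  · exact (edgeGraphOn_adj.1 (p.adj_getVert_succ hi)).2.1
  · rwa [p.getVert_length]

section Polyhedron

variable {ι : Type*} (A : ι → Fin n → ℝ) (b : ι → ℝ)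

def polyhedron : Set (Fin n → ℝ) := {x | ∀ i, A i ⬝ᵥ x ≥ b i}

lemma polyhedron_eq_iInter : polyhedron A b = ⋂ i, {x | b i ≤ A i ⬝ᵥ x} := by
  ext x; simp [polyhedron]

lemma isClosed_polyhedron : IsClosed (polyhedron A b) := by
  rw [polyhedron_eq_iInter]
  exact isClosed_iInter fun i => isClosed_le continuous_const (by fun_prop)

lemma convex_polyhedron : Convex ℝ (polyhedron A b) := by
  rw [polyhedron_eq_iInter]
  exact convex_iInter fun i => convex_halfSpace_ge (dotProductBilin ℝ ℝ (A i)).isLinear (b i)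

lemma eventually_add_smul_mem_polyhedron [Fintype ι] {x d : Fin n → ℝ} (hx : x ∈ polyhedron A b)
    (hd : ∀ i, A i ⬝ᵥ x = b i → 0 ≤ A i ⬝ᵥ d) :
    ∀ᶠ t in 𝓝[≥] (0 : ℝ), x + t • d ∈ polyhedron A b := by
  simp only [polyhedron, mem_ofPred_eq, dotProduct_add, dotProduct_smul, smul_eq_mul]
  refine eventually_all.2 fun i => ?_
  rcases (hx i).eq_or_lt with h | h
  · filter_upwards [self_mem_nhdsWithin] with t (ht : 0 ≤ t)
    nlinarith [hd i h.symm]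
  · have : Tendsto (fun t : ℝ => A i ⬝ᵥ x + t * A i ⬝ᵥ d) (𝓝[≥] 0) (𝓝 (A i ⬝ᵥ x)) :=
      ((Continuous.tendsto' (by fun_prop) 0 _ (by simp))).mono_left nhdsWithin_le_nhds
    exact (this.eventually (eventually_gt_nhds h)).mono fun _ => le_of_lt

lemma eq_zero_of_mem_extremePoints_polyhedron [Fintype ι] {x z : Fin n → ℝ}
    (hx : x ∈ extremePoints ℝ (polyhedron A b)) (hz : ∀ i, A i ⬝ᵥ x = b i → A i ⬝ᵥ z = 0) :
    z = 0 :=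
  eq_zero_of_mem_extremePoints hx <|
    (eventually_add_smul_mem_polyhedron A b hx.1 fun i hi => (hz i hi).ge).and
      (eventually_add_smul_mem_polyhedron A b hx.1 fun i hi => by simp [hz i hi])

lemma isFace_setOf_tight (J : Finset ι) :
    IsFace (polyhedron A b) {x ∈ polyhedron A b | ∀ i ∈ J, A i ⬝ᵥ x = b i} := by
  rcases eq_empty_or_nonempty {x ∈ polyhedron A b | ∀ i ∈ J, A i ⬝ᵥ x = b i} with
    h | ⟨x₀, hx₀, hx₀J⟩
  · exact Or.inl h
  refine Or.inr ⟨∑ i ∈ J, A i, ?_⟩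
  have hle : ∀ y ∈ polyhedron A b, ∑ i ∈ J, b i ≤ ∑ i ∈ J, A i ⬝ᵥ y :=
    fun y hy => Finset.sum_le_sum fun i _ => hy i
  ext y
  simp only [mem_ofPred_eq, sum_dotProduct]
  refine ⟨fun ⟨hy, hyJ⟩ => ⟨hy, fun z hz => ?_⟩, fun ⟨hy, hmin⟩ => ⟨hy, ?_⟩⟩
  · rw [Finset.sum_congr rfl hyJ]; exact hle z hz
  · have heq := (Finset.sum_eq_sum_iff_of_le fun i _ => (hy i).le).1 <|
      le_antisymm (hle y hy) ((hmin x₀ hx₀).trans (Finset.sum_congr rfl hx₀J).le)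
    exact fun i hi => (heq i hi).symm

lemma isVertex_of_mem_extremePoints [Fintype ι] {x : Fin n → ℝ}
    (hx : x ∈ extremePoints ℝ (polyhedron A b)) : IsVertex (polyhedron A b) x := by
  show IsFace _ {x}
  convert isFace_setOf_tight A b {i | A i ⬝ᵥ x = b i} using 1
  ext y
  refine ⟨fun hy => ?_, fun ⟨_, hyJ⟩ => ?_⟩
  · rw [mem_singleton_iff.1 hy]
    exact ⟨hx.1, fun i hi => by simpa using hi⟩
  refine sub_eq_zero.1 (eq_zero_of_mem_extremePoints_polyhedron A b hx fun i hi => ?_)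
  rw [dotProduct_sub, hyJ i (by simpa using hi), hi, sub_self]

lemma finite_setOf_isVertex [Fintype ι] : {x | IsVertex (polyhedron A b) x}.Finite := by
  refine Finite.of_finite_image (f := fun x => {i | A i ⬝ᵥ x = b i}) (toFinite _)
    fun x hx y _ hxy => sub_eq_zero.1 ?_
  refine eq_zero_of_mem_extremePoints_polyhedron A b hx.mem_extremePoints fun i hi => ?_
  have hi' : A i ⬝ᵥ y = b i := (Set.ext_iff.1 hxy i).1 hi
  rw [dotProduct_sub, hi, hi', sub_self]

end Polyhedron

lemma exists_extreme_ray {κ : Type*} [Fintype κ] (a : κ → Fin n → ℝ)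
    (ha : ∀ d, (∀ k, a k ⬝ᵥ d = 0) → d = 0) {f d₀ : Fin n → ℝ}
    (hd₀ : ∀ k, 0 ≤ a k ⬝ᵥ d₀) (hfd₀ : f ⬝ᵥ d₀ < 0) :
    ∃ d, (∀ k, 0 ≤ a k ⬝ᵥ d) ∧ f ⬝ᵥ d < 0 ∧
      ∀ z, (∀ k, a k ⬝ᵥ d = 0 → a k ⬝ᵥ z = 0) → ∃ t : ℝ, z = t • d := by
  set e := ∑ k, a k
  have he : ∀ d, e ⬝ᵥ d = ∑ k, a k ⬝ᵥ d := fun d => sum_dotProduct _ _ _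
  set D := {d ∈ polyhedron a 0 | e ⬝ᵥ d = 1}
  have hDcompact : IsCompact D := by
    have hemb := LinearMap.isClosedEmbedding_of_injective (f := mulVecLin (Matrix.of a))
      (LinearMap.ker_eq_bot'.2 fun d hd => ha d fun k => congrFun hd k)
    -- `d ↦ (a k ⬝ᵥ d)ₖ` is injective and maps `D` into `[0, 1] ^ κ`
    refine (hemb.isCompact_preimage (isCompact_Icc (a := 0) (b := 1))).of_isClosed_subset
      ((isClosed_polyhedron a 0).inter (isClosed_eq (by fun_prop) continuous_const))
      fun d ⟨hd, hed⟩ => ⟨fun k => hd k, fun k => ?_⟩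
    calc a k ⬝ᵥ d ≤ ∑ k, a k ⬝ᵥ d := Finset.single_le_sum (fun k _ => hd k) (Finset.mem_univ k)
      _ = 1 := (he d).symm.trans hed
  have hed₀ : 0 < e ⬝ᵥ d₀ := by
    rw [he]
    refine (Finset.sum_nonneg fun k _ => hd₀ k).lt_of_ne fun h => ?_
    have := ha d₀ fun k => (Finset.sum_eq_zero_iff_of_nonneg fun k _ => hd₀ k).1 h.symm k
      (Finset.mem_univ k)
    simp [this] at hfd₀
  have hd₁ : (e ⬝ᵥ d₀)⁻¹ • d₀ ∈ D := by
    refine ⟨fun k => ?_, ?_⟩ <;> simp only [dotProduct_smul, smul_eq_mul]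
    · exact mul_nonneg (inv_nonneg.2 hed₀.le) (hd₀ k)
    · exact inv_mul_cancel₀ hed₀.ne'
  obtain ⟨d₁, hd₁D, hd₁min⟩ := hDcompact.exists_isMinOn ⟨_, hd₁⟩
    (by fun_prop : Continuous (f ⬝ᵥ ·)).continuousOn
  have hface := (isFace_minSet D f).isExposed
  obtain ⟨d, hd⟩ := (hface.isCompact hDcompact).extremePoints_nonempty ⟨d₁, hd₁D, hd₁min⟩
  have hdD := hface.isExtreme.extremePoints_subset_extremePoints hd
  refine ⟨d, hdD.1.1, (hd.1.2 _ hd₁).trans_lt ?_, fun z hz => ⟨e ⬝ᵥ z, sub_eq_zero.1 ?_⟩⟩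
  · simpa [dotProduct_smul] using mul_neg_of_pos_of_neg (inv_pos.2 hed₀) hfd₀
  have hmem : ∀ y, (∀ k, a k ⬝ᵥ d = 0 → a k ⬝ᵥ y = 0) → e ⬝ᵥ y = 0 →
      ∀ᶠ t in 𝓝[≥] (0 : ℝ), d + t • y ∈ D := fun y hy hey =>
    (eventually_add_smul_mem_polyhedron a 0 hdD.1.1 fun k hk => (hy k hk).ge).mono
      fun t ht => ⟨ht, by simp [dotProduct_add, hey, hdD.1.2]⟩
  have hz' : ∀ k, a k ⬝ᵥ d = 0 → a k ⬝ᵥ (z - (e ⬝ᵥ z) • d) = 0 := fun k hk => by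
    simp [dotProduct_sub, hk, hz k hk]
  have hez' : e ⬝ᵥ (z - (e ⬝ᵥ z) • d) = 0 := by simp [dotProduct_sub, hdD.1.2]
  exact eq_zero_of_mem_extremePoints hdD <| (hmem _ hz' hez').and
    (hmem _ (fun k hk => by rw [dotProduct_neg, hz' k hk, neg_zero])
      (by rw [dotProduct_neg, hez', neg_zero]))

section CompactPolyhedron

variable {ι : Type*} [Fintype ι] (A : ι → Fin n → ℝ) (b : ι → ℝ)

lemma exists_eq_add_smul_of_tight {v d x : Fin n → ℝ} (hv : IsVertex (polyhedron A b) v)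
    (hd : ∀ i, A i ⬝ᵥ v = b i → 0 ≤ A i ⬝ᵥ d) (hd0 : d ≠ 0)
    (hray : ∀ z, (∀ i, A i ⬝ᵥ v = b i → A i ⬝ᵥ d = 0 → A i ⬝ᵥ z = 0) → ∃ t : ℝ, z = t • d)
    (hx : x ∈ polyhedron A b) (hxJ : ∀ i, A i ⬝ᵥ v = b i → A i ⬝ᵥ d = 0 → A i ⬝ᵥ x = b i) :
    ∃ t : ℝ, 0 ≤ t ∧ x = v + t • d := by
  obtain ⟨t, ht⟩ := hray (x - v) fun i hvi hdi => by
    rw [dotProduct_sub, hxJ i hvi hdi, hvi, sub_self]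
  refine ⟨t, not_lt.1 fun ht0 => hd0 ?_, by rw [← ht, add_sub_cancel]⟩
  refine eq_zero_of_mem_extremePoints_polyhedron A b hv.mem_extremePoints fun i hi => ?_
  refine le_antisymm (nonpos_of_mul_nonneg_right ?_ ht0) (hd i hi)
  rw [← smul_eq_mul, ← dotProduct_smul, ← ht, dotProduct_sub, hi]
  exact sub_nonneg.2 (hx i)

lemma exists_adj_of_extreme_ray (hc : IsCompact (polyhedron A b)) {v d f : Fin n → ℝ}
    (hv : IsVertex (polyhedron A b) v) (hd : ∀ i, A i ⬝ᵥ v = b i → 0 ≤ A i ⬝ᵥ d)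
    (hray : ∀ z, (∀ i, A i ⬝ᵥ v = b i → A i ⬝ᵥ d = 0 → A i ⬝ᵥ z = 0) → ∃ t : ℝ, z = t • d)
    (hfd : f ⬝ᵥ d < 0) :
    ∃ w, IsVertex (polyhedron A b) w ∧ Adj (polyhedron A b) v w ∧ f ⬝ᵥ w < f ⬝ᵥ v := by
  set J := Finset.univ.filter fun i => A i ⬝ᵥ v = b i ∧ A i ⬝ᵥ d = 0
  set F := {x ∈ polyhedron A b | ∀ i ∈ J, A i ⬝ᵥ x = b i}
  have hF : IsExposed ℝ (polyhedron A b) F := (isFace_setOf_tight A b J).isExposed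
  have hvF : v ∈ F := ⟨hv.mem, fun i hi => (Finset.mem_filter.1 hi).2.1⟩
  have hf_le : ∀ s t : ℝ, f ⬝ᵥ (v + s • d) ≤ f ⬝ᵥ (v + t • d) ↔ t ≤ s := fun s t => by
    simp only [dotProduct_add, dotProduct_smul, smul_eq_mul, add_le_add_iff_left]
    exact mul_le_mul_right_of_neg hfd
  have hFray : ∀ x ∈ F, ∃ t : ℝ, 0 ≤ t ∧ x = v + t • d := fun x hx =>
    exists_eq_add_smul_of_tight A b hv hd (by rintro rfl; simp at hfd) hray hx.1
      fun i hvi hdi => hx.2 i (by simp [J, hvi, hdi])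
  have hray_mem : ∀ᶠ t in 𝓝[≥] (0 : ℝ), v + t • d ∈ F :=
    (eventually_add_smul_mem_polyhedron A b hv.mem hd).mono fun t ht => ⟨ht, fun i hi => by
      simp only [J, Finset.mem_filter] at hi
      simp [dotProduct_add, hi.2.1, hi.2.2]⟩
  obtain ⟨t, htF, ht⟩ :=
    ((hray_mem.filter_mono (nhdsWithin_mono _ Ioi_subset_Ici_self)).and self_mem_nhdsWithin).exists
  obtain ⟨w, hwF, hwmin⟩ := (hF.isCompact hc).exists_isMinOn ⟨v, hvF⟩
    (by fun_prop : Continuous (f ⬝ᵥ ·)).continuousOn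
  rw [isMinOn_iff] at hwmin
  obtain ⟨s, -, rfl⟩ := hFray w hwF
  have hts : t ≤ s := (hf_le s t).1 (hwmin _ htF)
  have hs : 0 < s := (mem_Ioi.1 ht).trans_le hts
  have hfw : f ⬝ᵥ (v + s • d) < f ⬝ᵥ v := by
    simpa using (hf_le 0 s).not.2 (not_le.2 hs)
  have hvw : v ≠ v + s • d := fun h => by rw [← h] at hfw; exact hfw.false
  have hseg : segment ℝ v (v + s • d) = F := by
    refine (hF.convex (convex_polyhedron A b)).segment_subset hvF hwF |>.antisymm fun x hx => ?_
    obtain ⟨r, hr, rfl⟩ := hFray x hx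
    rw [segment_eq_image']
    refine ⟨r / s, ⟨by positivity, div_le_one_of_le₀ ((hf_le s r).1 (hwmin _ hx)) hs.le⟩, ?_⟩
    simp [smul_smul, div_mul_cancel₀ _ hs.ne']
  have hwF' : IsVertex F (v + s • d) := by
    refine Or.inr ⟨f, Set.ext fun x => ⟨fun hx => mem_singleton_iff.1 hx ▸ ⟨hwF, hwmin⟩,
      fun ⟨hx, hxmin⟩ => ?_⟩⟩
    obtain ⟨r, -, rfl⟩ := hFray x hx
    rw [mem_singleton_iff, le_antisymm ((hf_le s r).1 (hwmin _ hx)) ((hf_le r s).1 (hxmin _ hwF))]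
  refine ⟨v + s • d, isVertex_of_mem_extremePoints A b
    (hF.isExtreme.extremePoints_subset_extremePoints hwF'.mem_extremePoints),
    ⟨hvw, hseg ▸ isFace_setOf_tight A b J, pdim_segment hvw⟩, hfw⟩

lemma exists_adj_dotProduct_lt (hc : IsCompact (polyhedron A b)) {v y f : Fin n → ℝ}
    (hv : IsVertex (polyhedron A b) v) (hy : y ∈ polyhedron A b) (hfy : f ⬝ᵥ y < f ⬝ᵥ v) :
    ∃ w, IsVertex (polyhedron A b) w ∧ Adj (polyhedron A b) v w ∧ f ⬝ᵥ w < f ⬝ᵥ v := by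
  obtain ⟨d, hd, hfd, hray⟩ := exists_extreme_ray (fun i : {i // A i ⬝ᵥ v = b i} => A i)
    (fun z hz => eq_zero_of_mem_extremePoints_polyhedron A b hv.mem_extremePoints
      fun i hi => hz ⟨i, hi⟩) (d₀ := y - v)
    (fun i => by rw [dotProduct_sub, i.2]; exact sub_nonneg.2 (hy i))
    (by rw [dotProduct_sub]; linarith)
  exact exists_adj_of_extreme_ray A b hc hv (fun i hi => hd ⟨i, hi⟩)
    (fun z hz => hray z fun i => hz i i.2) hfd

lemma exists_adj_mem_minSet_dotProduct_lt (hc : IsCompact (polyhedron A b)) {u y g h : Fin n → ℝ}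
    (hu : IsVertex (polyhedron A b) u) (huF : u ∈ minSet (polyhedron A b) g)
    (hy : y ∈ minSet (polyhedron A b) g) (hhy : h ⬝ᵥ y < h ⬝ᵥ u) :
    ∃ u', IsVertex (polyhedron A b) u' ∧ Adj (polyhedron A b) u u' ∧
      u' ∈ minSet (polyhedron A b) g ∧ h ⬝ᵥ u' < h ⬝ᵥ u := by
  -- for `r` large, a step decreasing `h + r • g` cannot leave the face where `g` is minimal
  obtain ⟨r, hr⟩ : ∃ r : ℝ, ∀ x ∈ {x | IsVertex (polyhedron A b) x},
      g ⬝ᵥ u < g ⬝ᵥ x → h ⬝ᵥ u - h ⬝ᵥ x < r * (g ⬝ᵥ x - g ⬝ᵥ u) := by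
    refine ((finite_setOf_isVertex A b).eventually_all.2 fun x _ => ?_).exists (f := atTop)
    by_cases hx : g ⬝ᵥ u < g ⬝ᵥ x
    · exact ((tendsto_id.atTop_mul_const (sub_pos.2 hx)).eventually_gt_atTop _).mono
        fun _ h _ => h
    · exact Eventually.of_forall fun _ h => absurd h hx
  have hgy : g ⬝ᵥ y = g ⬝ᵥ u := le_antisymm (hy.2 u huF.1) (huF.2 y hy.1)
  obtain ⟨u', hu', hadj, hlt⟩ := exists_adj_dotProduct_lt A b hc hu hy.1 (f := h + r • g)
    (by simpa [add_dotProduct, hgy] using hhy)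
  simp only [add_dotProduct, smul_dotProduct, smul_eq_mul] at hlt
  have hgu' : g ⬝ᵥ u' = g ⬝ᵥ u :=
    le_antisymm (not_lt.1 fun hgt => by linarith [hr u' hu' hgt]) (huF.2 u' hu'.mem)
  exact ⟨u', hu', hadj, ⟨hu'.mem, hgu' ▸ huF.2⟩, by rw [hgu'] at hlt; linarith⟩

lemma exists_reachable_mem_minSet_minSet (hc : IsCompact (polyhedron A b))
    {g h u : Fin n → ℝ} {S : Set (Fin n → ℝ)}
    (hS : ∀ x ∈ S, ∀ y ∈ minSet (polyhedron A b) g, h ⬝ᵥ y < h ⬝ᵥ x → y ∈ S)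
    (hu : IsVertex (polyhedron A b) u) (huF : u ∈ minSet (polyhedron A b) g) (huS : u ∈ S) :
    ∃ u', IsVertex (polyhedron A b) u' ∧ u' ∈ minSet (minSet (polyhedron A b) g) h ∧
      (edgeGraphOn (polyhedron A b) S).Reachable u u' := by
  set R := {x | IsVertex (polyhedron A b) x ∧ x ∈ minSet (polyhedron A b) g ∧ x ∈ S ∧
    (edgeGraphOn (polyhedron A b) S).Reachable u x}
  obtain ⟨x, ⟨hx, hxF, hxS, hux⟩, hmin⟩ := R.exists_min_image (h ⬝ᵥ ·)
    ((finite_setOf_isVertex A b).subset fun x hx => hx.1) ⟨u, hu, huF, huS, .rfl⟩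
  refine ⟨x, hx, ⟨hxF, fun y hy => not_lt.1 fun hlt => ?_⟩, hux⟩
  obtain ⟨x', hx', hadj, hx'F, hlt'⟩ := exists_adj_mem_minSet_dotProduct_lt A b hc hx hxF hy hlt
  have hx'S := hS x hxS x' hx'F hlt'
  have hux' := hux.trans (edgeGraphOn_adj.2 ⟨hadj, hxS, hx'S⟩).reachable
  exact (hmin x' ⟨hx', hx'F, hx'S, hux'⟩).not_gt hlt'

lemma reachable_of_le_dotProduct (hc : IsCompact (polyhedron A b)) {V : Finset (Fin n → ℝ)}
    {f x₀ v w : Fin n → ℝ} {α : ℝ}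
    (hV : ∀ u ∈ V, f ⬝ᵥ u = α) (hx₀ : x₀ ∈ polyhedron A b) (hαx₀ : α < f ⬝ᵥ x₀)
    (hv : IsVertex (polyhedron A b) v) (hw : IsVertex (polyhedron A b) w)
    (hvV : v ∉ V) (hwV : w ∉ V) (hαv : α ≤ f ⬝ᵥ v) (hαw : α ≤ f ⬝ᵥ w) :
    (edgeGraphOn (polyhedron A b) (↑V)ᶜ).Reachable v w := by
  set P := polyhedron A b
  set G := edgeGraphOn P (↑V)ᶜ
  have hV' : ∀ u, α < f ⬝ᵥ u → u ∉ V := fun u hu huV => (hV u huV ▸ hu).false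
  have climb : ∀ x, IsVertex P x → x ∉ V → α ≤ f ⬝ᵥ x →
      ∃ p, IsVertex P p ∧ p ∈ minSet P (-f) ∧ G.Reachable x p := by
    intro x hx hxV hαx
    obtain ⟨p, hp, hpF, hxp⟩ := exists_reachable_mem_minSet_minSet A b hc (g := 0) (h := -f)
      (S := {y | y ∉ V ∧ α ≤ f ⬝ᵥ y}) (fun y ⟨_, hαy⟩ z _ hlt => by
        simp only [neg_dotProduct, neg_lt_neg_iff] at hlt
        exact ⟨hV' z (hαy.trans_lt hlt), (hαy.trans_lt hlt).le⟩)
      hx ⟨hx.mem, by simp⟩ ⟨hxV, hαx⟩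
    exact ⟨p, hp, ⟨hp.mem, fun y hy => hpF.2 y ⟨hy, by simp⟩⟩,
      hxp.mono (edgeGraphOn_mono fun y hy => hy.1)⟩
  have descend : ∀ p q, IsVertex P p → p ∈ minSet P (-f) → IsVertex P q → q ∈ minSet P (-f) →
      G.Reachable q p := by
    intro p q hp hpF hq hqF
    obtain ⟨c, hpc⟩ := hp.resolve_left (singleton_ne_empty p)
    have hF : ∀ y ∈ minSet P (-f), y ∉ V := fun y hy =>
      hV' y (hαx₀.trans_le (by simpa using hy.2 x₀ hx₀))
    obtain ⟨q', -, hq'F, hqq'⟩ := exists_reachable_mem_minSet_minSet A b hc (S := (↑V)ᶜ)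
      (fun _ _ y hy _ => hF y hy) hq hqF (hF q hqF)
    have hq'p : q' = p := by
      have hpmin : p ∈ minSet P c := (Set.ext_iff.1 hpc p).1 rfl
      rw [← mem_singleton_iff, hpc]
      exact ⟨hq'F.1.1, fun y hy => (hq'F.2 p hpF).trans (hpmin.2 y hy)⟩
    exact hq'p ▸ hqq'
  obtain ⟨p, hp, hpF, hvp⟩ := climb v hv hvV hαv
  obtain ⟨q, hq, hqF, hwq⟩ := climb w hw hwV hαw
  exact hvp.trans ((descend p q hp hpF hq hqF).symm.trans hwq.symm)

end CompactPolyhedron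

lemma exists_ne_zero_dotProduct_eq (S : Finset (Fin n → ℝ)) (hS : S.card < n)
    (p₀ : Fin n → ℝ) : ∃ f ≠ 0, ∀ p ∈ S, f ⬝ᵥ p = f ⬝ᵥ p₀ := by
  obtain ⟨f, hf, hf0⟩ := (Submodule.ne_bot_iff _).1 <| LinearMap.ker_ne_bot_of_finrank_lt
    (f := mulVecLin (Matrix.of fun p : S => (p : Fin n → ℝ) - p₀)) (by simpa using hS)
  refine ⟨f, hf0, fun p hp => sub_eq_zero.1 ?_⟩
  rw [← dotProduct_sub, dotProduct_comm]
  exact congrFun (LinearMap.mem_ker.1 hf) ⟨p, hp⟩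

lemma exists_dotProduct_ne {P : Set (Fin n → ℝ)} (hP : pdim P = n) {f v : Fin n → ℝ}
    (hf : f ≠ 0) (hv : v ∈ P) : ∃ x ∈ P, f ⬝ᵥ x ≠ f ⬝ᵥ v := by
  by_contra! h
  have hspan : vectorSpan ℝ P = ⊤ := by
    rw [pdim, if_neg (nonempty_of_mem hv).ne_empty] at hP
    exact Submodule.eq_top_of_finrank_eq (by simpa using hP)
  have hker : vectorSpan ℝ P ≤ LinearMap.ker (dotProductEquiv ℝ (Fin n) f) := by
    rw [vectorSpan_eq_span_vsub_set_right ℝ hv, Submodule.span_le]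
    rintro _ ⟨x, hx, rfl⟩
    simp [dotProduct_sub, h x hx]
  exact hf (dotProduct_self_eq_zero.1 (hker (hspan ▸ Submodule.mem_top)))

end Balinski

theorem balinski_general {n : ℕ} (P : Set (Fin n → ℝ)) (hP : IsPolyhedron P)
    (hc : IsCompact P) (hd : pdim P = n) (V : Finset (Fin n → ℝ))
    (hcard : V.card ≤ n - 1)
    (v w : Fin n → ℝ) (hv : IsVertex P v) (hw : IsVertex P w)
    (hvV : v ∉ V) (hwV : w ∉ V) :
    ∃ (k : ℕ) (u : ℕ → Fin n → ℝ), u 0 = v ∧ u k = w ∧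
      (∀ i < k, Adj P (u i) (u (i + 1))) ∧ ∀ i ≤ k, u i ∉ V := by
  obtain ⟨m, A, b, rfl⟩ := hP
  suffices (edgeGraphOn (polyhedron A b) (↑V)ᶜ).Reachable v w from
    exists_path_of_reachable this hwV
  rcases Nat.eq_zero_or_pos n with rfl | hn
  · rw [Subsingleton.elim v w]
  obtain ⟨f, hf, hfV⟩ := exists_ne_zero_dotProduct_eq V (by omega) v
  obtain ⟨x, hx, hfx⟩ := exists_dotProduct_ne hd hf hv.mem
  have hfV' : ∀ u ∈ V, -f ⬝ᵥ u = -f ⬝ᵥ v := fun u hu => by simp [hfV u hu]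
  rcases le_or_gt (f ⬝ᵥ v) (f ⬝ᵥ w) with hvw | hvw
  · by_cases htop : ∃ y ∈ polyhedron A b, f ⬝ᵥ v < f ⬝ᵥ y
    · obtain ⟨y, hy, hfy⟩ := htop
      exact reachable_of_le_dotProduct A b hc hfV hy hfy hv hw hvV hwV le_rfl hvw
    push Not at htop
    exact reachable_of_le_dotProduct A b hc hfV' hx (by simpa using (htop x hx).lt_of_ne hfx)
      hv hw hvV hwV le_rfl (by simpa using htop w hw.mem)
  · exact reachable_of_le_dotProduct A b hc hfV' hw.mem (by simpa using hvw) hv hw hvV hwV le_rfl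
      (by simpa using hvw.le)

theorem balinski {n : ℕ} (P : Set (Fin n → ℝ)) (hP : IsPolyhedron P)
    (hc : IsCompact P) (hd : pdim P = n) (V : Finset (Fin n → ℝ))
    (hV : ∀ u ∈ V, IsVertex P u) (hcard : V.card ≤ n - 1)
    (v w : Fin n → ℝ) (hv : IsVertex P v) (hw : IsVertex P w)
    (hvV : v ∉ V) (hwV : w ∉ V) :
    ∃ (k : ℕ) (u : ℕ → Fin n → ℝ), u 0 = v ∧ u k = w ∧
      (∀ i < k, Adj P (u i) (u (i + 1))) ∧ ∀ i ≤ k, u i ∉ V :=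
  balinski_general P hP hc hd V hcard v w hv hw hvV hwV
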